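/- arXiv:2412.19335 — 2 statements merged into one kernel-verified Lean document; each statement's English description precedes it below -/
import Mathlib

section
/- Let K be an algebraically closed field of characteristic 0 equipped with a nontrivial non-Archimedean absolute value of residue characteristic 0 or greater than d, and let f be a polynomial of degree d ≥ 2 over K whose fixed-point multipliers λ₁, …, λ_d all differ from 1 (counted with multiplicity). Then max_j |λ_j| ≥ 1. -/
/-!
Put `g = f - X`. Since every multiplier differs from `1`, the `d` fixed points are simple zeros
of `g`, and the holomorphic fixed-point formula `∑ 1 / g'(z) = 0` holds (the sum of the nodal
weights of at least two nodes vanishes). If all multipliers satisfied `|λ| < 1`, then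
`|λ - 1| = 1`, so each term of `∑ (1 / (λ - 1) + 1) = d` would be `λ / (λ - 1)`, of absolute
value `< 1`; the ultrametric inequality would give `|d| < 1`, contradicting `|d| = 1`.
-/

open Polynomial Finset

namespace Lagrange

variable {F ι : Type*} [Field F] [DecidableEq ι] {s : Finset ι} {v : ι → F}

theorem sum_nodalWeight_eq_zero (hvs : Set.InjOn v s) (hs : 2 ≤ #s) :
    ∑ i ∈ s, nodalWeight s v i = 0 := by
  -- the nodal weights are the leading coefficients of the Lagrange basis, which sums to `1`
  have hcoeff := congrArg (coeff · (#s - 1)) (sum_basis hvs (card_pos.mp (by omega)))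
  simp only [finsetSum_coeff, coeff_one, if_neg (show #s - 1 ≠ 0 by omega)] at hcoeff
  rw [← hcoeff]
  refine sum_congr rfl fun i hi => ?_
  have hdeg : (nodal (s.erase i) v).natDegree = #s - 1 := by
    rw [natDegree_nodal, card_erase_of_mem hi]
  rw [basis_eq_prod_sub_inv_mul_nodal_div hi, ← nodal_erase_eq_nodal_div hi, coeff_C_mul,
    ← hdeg, nodal_monic.coeff_natDegree, mul_one]

end Lagrange

namespace Polynomial

theorem nodup_roots_of_eval_derivative_ne_zero {R : Type*} [CommRing R] [IsDomain R] {p : R[X]}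
    (h : ∀ z ∈ p.roots, p.derivative.eval z ≠ 0) : p.roots.Nodup := by
  rcases eq_or_ne p 0 with rfl | hp
  · simp
  classical
  refine Multiset.nodup_iff_count_le_one.mpr fun z => ?_
  rw [count_roots]
  by_contra! hz
  obtain ⟨hroot, hderiv⟩ := (one_lt_rootMultiplicity_iff_isRoot hp).mp hz
  exact h z ((mem_roots hp).mpr hroot) hderiv

theorem sum_inv_eval_derivative_roots_eq_zero {F : Type*} [Field F] [DecidableEq F] {p : F[X]}
    (hp : p.Splits) (hnodup : p.roots.Nodup) (hdeg : 2 ≤ p.natDegree) :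
    ∑ z ∈ p.roots.toFinset, (p.derivative.eval z)⁻¹ = 0 := by
  set s := p.roots.toFinset with hs
  set c := p.leadingCoeff
  have hval : s.val = p.roots := by rw [hs, Multiset.toFinset_val, hnodup.dedup]
  have hp_eq : p = C c * Lagrange.nodal s id := by
    conv_lhs => rw [hp.eq_prod_roots]
    rw [Lagrange.nodal, prod_eq_multiset_prod, hval]
    rfl
  have hterm : ∀ z ∈ s, (p.derivative.eval z)⁻¹ = c⁻¹ * Lagrange.nodalWeight s id z := by
    intro z hz
    rw [hp_eq, derivative_C_mul, eval_mul, eval_C, mul_inv,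
      Lagrange.nodalWeight_eq_eval_derivative_nodal hz, id]
  have hcard : 2 ≤ #s := by
    rwa [Multiset.toFinset_card_of_nodup hnodup, ← hp.natDegree_eq_card_roots]
  rw [sum_congr rfl hterm, ← mul_sum,
    Lagrange.sum_nodalWeight_eq_zero Function.injective_id.injOn hcard, mul_zero]

end Polynomial

namespace IsNonarchimedean

variable {K : Type*} [Field K] {v : AbsoluteValue K ℝ}

theorem apply_sub_one_eq_one (hna : IsNonarchimedean v) {x : K} (hx : v x < 1) :
    v (x - 1) = 1 := by
  rw [← map_neg_eq_map, neg_sub, sub_eq_add_neg, hna.add_eq_left_of_lt (by simpa using hx),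
    map_one]

theorem apply_inv_sub_one_add_one_lt_one (hna : IsNonarchimedean v) {x : K} (hx : v x < 1) :
    v ((x - 1)⁻¹ + 1) < 1 := by
  have hsub := hna.apply_sub_one_eq_one hx
  have hne : x - 1 ≠ 0 := fun h => by simp [h] at hsub
  rw [show (x - 1)⁻¹ + 1 = x * (x - 1)⁻¹ by field_simp; ring, map_mul, map_inv₀, hsub, inv_one,
    mul_one]
  exact hx

end IsNonarchimedean

theorem stmt_6_general {K : Type*} [Field K] [IsAlgClosed K]
    (v : AbsoluteValue K ℝ) (hna : IsNonarchimedean ⇑v)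
    (d : ℕ) (hd : 2 ≤ d)
    (hres : ∀ n : ℕ, 1 ≤ n → n ≤ d → v (n : K) = 1)
    (f : K[X]) (hdeg : f.natDegree = d)
    (hmult : ∀ z ∈ (f - X).roots, (derivative f).eval z ≠ 1) :
    ∃ z ∈ (f - X).roots, 1 ≤ v ((derivative f).eval z) := by
  classical
  by_contra! hsmall
  set g := f - X
  have hgdeg : g.natDegree = d := by
    rw [natDegree_sub_eq_left_of_natDegree_lt (by rw [natDegree_X, hdeg]; omega), hdeg]
  have hg' : ∀ z, g.derivative.eval z = f.derivative.eval z - 1 := by simp [g]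
  have hnodup : g.roots.Nodup := nodup_roots_of_eval_derivative_ne_zero fun z hz => by
    rw [hg', sub_ne_zero]; exact hmult z hz
  have hsplit : g.Splits := IsAlgClosed.splits g
  have hsum : ∑ z ∈ g.roots.toFinset, ((g.derivative.eval z)⁻¹ + 1) = d := by
    rw [sum_add_distrib, sum_inv_eval_derivative_roots_eq_zero hsplit hnodup (hgdeg ▸ hd),
      sum_const, Multiset.toFinset_card_of_nodup hnodup, ← hsplit.natDegree_eq_card_roots,
      hgdeg, nsmul_one, zero_add]
  have hne : g.roots.toFinset.Nonempty :=
    Multiset.toFinset_nonempty.mpr (hsplit.roots_ne_zero (by omega))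
  obtain ⟨z, hz, hle⟩ := hna.finset_image_add_of_nonempty _ hne
  have hlt := hna.apply_inv_sub_one_add_one_lt_one (hsmall z (Multiset.mem_toFinset.mp hz))
  rw [hsum, hres d (by omega) le_rfl, hg'] at hle
  linarith

/-- Over an algebraically closed field of characteristic zero with a nontrivial
non-Archimedean absolute value whose residue characteristic is `0` or greater than `d`
(equivalently `|n| = 1` for `1 ≤ n ≤ d`), a degree-`d` polynomial all of whose
fixed-point multipliers differ from `1` has a fixed-point multiplier of absolute value
at least `1`. -/
theorem stmt_6 {K : Type*} [Field K] [IsAlgClosed K] [CharZero K]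
    (v : AbsoluteValue K ℝ) (hna : IsNonarchimedean ⇑v)
    (hnontriv : ∃ x : K, x ≠ 0 ∧ v x ≠ 1)
    (d : ℕ) (hd : 2 ≤ d)
    (hres : ∀ n : ℕ, 1 ≤ n → n ≤ d → v (n : K) = 1)
    (f : K[X]) (hdeg : f.natDegree = d)
    (hmult : ∀ z ∈ (f - X).roots, (derivative f).eval z ≠ 1) :
    ∃ z ∈ (f - X).roots, 1 ≤ v ((derivative f).eval z) :=
  stmt_6_general v hna d hd hres f hdeg hmult
end

section
/- Let K be an algebraically closed field with a non-Archimedean absolute value, let f : U → V be a polynomial map of degree e ≥ 1 between disks, with e less than the residue characteristic of K if positive, and let V₁, V₂ be disjoint disks contained in V. Then there exist j ∈ {1,2} and a disk component U_j of f⁻¹(V_j) such that f restricts to a bijection from U_j onto V_j. -/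
/-!
Fix a disk `W ⊆ V` and `y ∈ W`. For a zero `x ∈ U` of `f - y`, the disk component of `f⁻¹(W)`
through `x` is the disk `D` about `x` whose radius makes the Gauss norm of `f - y` about `x` equal
to the radius of `W`; it lies in `U` because `f(U) ⊇ V ⊄ W`. The Newton polygon of `f - w` about `x`
shows that every `w ∈ W` has the same number `d ≤ e` of preimages in `D`, and, `d` being a unit,
that `f'` has exactly `d - 1` zeros in `D` (non-Archimedean Riemann–Hurwitz); in the same way `f'`
has `e - 1` zeros in `U`. If no component over `V₁` or `V₂` is mapped bijectively, then `d ≥ 2`,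
hence `d ≤ 2 (d - 1)`, for every component, so the components over each `Vⱼ` contain at least
`e / 2` zeros of `f'`; as they are disjoint, `U` would contain at least `e`.
-/

open Polynomial
open scoped Classical

/-- `D` is a disk (open or closed) for the absolute value `v`. -/
def IsDisk {K : Type*} [Field K] (v : AbsoluteValue K ℝ) (D : Set K) : Prop :=
  ∃ a : K, ∃ r : ℝ, 0 < r ∧
    (D = {z : K | v (z - a) < r} ∨ D = {z : K | v (z - a) ≤ r})

/-- `D` is a disk component of `S`: a disk contained in `S` that is maximal among
disks contained in `S`. -/
def IsDiskComponent {K : Type*} [Field K] (v : AbsoluteValue K ℝ)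
    (S D : Set K) : Prop :=
  IsDisk v D ∧ D ⊆ S ∧ ∀ D' : Set K, IsDisk v D' → D ⊆ D' → D' ⊆ S → D' = D

/-- `D` is a disk (open or closed) of radius `r` for the absolute value `v`. -/
def IsDiskOfRadius {K : Type*} [Field K] (v : AbsoluteValue K ℝ) (D : Set K)
    (r : ℝ) : Prop :=
  0 < r ∧ ∃ a : K, D = {z : K | v (z - a) < r} ∨ D = {z : K | v (z - a) ≤ r}

/-- The number of preimages of `y` under `f` lying in `U`, counted with multiplicity. -/
noncomputable def mapDegreeOn {K : Type*} [Field K] (f : K[X]) (U : Set K) (y : K) : ℕ :=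
  Multiset.card (Multiset.filter (· ∈ U) ((f - C y).roots))

section Disks

variable {K : Type*} [Field K] {v : AbsoluteValue K ℝ}

variable (v) in
def openDisk (a : K) (r : ℝ) : Set K := {z | v (z - a) < r}

variable (v) in
def closedDisk (a : K) (r : ℝ) : Set K := {z | v (z - a) ≤ r}

@[simp] lemma mem_openDisk {a z : K} {r : ℝ} : z ∈ openDisk v a r ↔ v (z - a) < r := Iff.rfl

@[simp] lemma mem_closedDisk {a z : K} {r : ℝ} : z ∈ closedDisk v a r ↔ v (z - a) ≤ r := Iff.rfl

lemma isDisk_iff {D : Set K} :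
    IsDisk v D ↔ ∃ a r, 0 < r ∧ (D = openDisk v a r ∨ D = closedDisk v a r) := Iff.rfl

lemma IsNonarchimedean.apply_sub_le_max_sub (hna : IsNonarchimedean v) (a b c : K) :
    v (a - c) ≤ max (v (a - b)) (v (b - c)) := by
  simpa using hna (a - b) (b - c)

lemma openDisk_eq_of_mem (hna : IsNonarchimedean v) {a y : K} {r : ℝ} (h : y ∈ openDisk v a r) :
    openDisk v y r = openDisk v a r := by
  ext z
  simp only [mem_openDisk] at h ⊢
  constructor <;> intro hz
  · exact (hna.apply_sub_le_max_sub z y a).trans_lt (max_lt hz h)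
  · exact (hna.apply_sub_le_max_sub z a y).trans_lt (max_lt hz (by rwa [v.map_sub]))

lemma closedDisk_eq_of_mem (hna : IsNonarchimedean v) {a y : K} {r : ℝ}
    (h : y ∈ closedDisk v a r) : closedDisk v y r = closedDisk v a r := by
  ext z
  simp only [mem_closedDisk] at h ⊢
  constructor <;> intro hz
  · exact (hna.apply_sub_le_max_sub z y a).trans (max_le hz h)
  · exact (hna.apply_sub_le_max_sub z a y).trans (max_le hz (by rwa [v.map_sub]))

lemma IsDisk.exists_center (hna : IsNonarchimedean v) {D : Set K} (hD : IsDisk v D) {y : K}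
    (hy : y ∈ D) : ∃ s, 0 < s ∧ (D = openDisk v y s ∨ D = closedDisk v y s) := by
  obtain ⟨a, r, hr, rfl | rfl⟩ := isDisk_iff.1 hD
  · exact ⟨r, hr, Or.inl (openDisk_eq_of_mem hna hy).symm⟩
  · exact ⟨r, hr, Or.inr (closedDisk_eq_of_mem hna hy).symm⟩

lemma IsDisk.nonempty {D : Set K} (hD : IsDisk v D) : D.Nonempty := by
  obtain ⟨a, r, hr, rfl | rfl⟩ := isDisk_iff.1 hD
  · exact ⟨a, by simpa using hr⟩
  · exact ⟨a, by simpa using hr.le⟩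

lemma IsDisk.closedDisk_subset (hna : IsNonarchimedean v) {D : Set K} (hD : IsDisk v D)
    {x z : K} (hx : x ∈ D) (hz : z ∈ D) : closedDisk v x (v (z - x)) ⊆ D := by
  intro w hw
  obtain ⟨a, r, -, rfl | rfl⟩ := isDisk_iff.1 hD
  all_goals
    have hwa : v (w - a) ≤ max (v (z - a)) (v (x - a)) := by
      refine (hna.apply_sub_le_max_sub w x a).trans (max_le ?_ le_sup_right)
      refine (mem_closedDisk.1 hw).trans ((hna.apply_sub_le_max_sub z a x).trans ?_)
      rw [v.map_sub a x]
    simp only [mem_openDisk, mem_closedDisk] at hx hz ⊢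
  · exact hwa.trans_lt (max_lt hz hx)
  · exact hwa.trans (max_le hz hx)

lemma IsDisk.subset_or_subset (hna : IsNonarchimedean v) {D₁ D₂ : Set K} (h₁ : IsDisk v D₁)
    (h₂ : IsDisk v D₂) (h : (D₁ ∩ D₂).Nonempty) : D₁ ⊆ D₂ ∨ D₂ ⊆ D₁ := by
  obtain ⟨x, hx₁, hx₂⟩ := h
  by_contra! hne
  obtain ⟨z₁, hz₁, hz₁'⟩ := Set.not_subset.1 hne.1
  obtain ⟨z₂, hz₂, hz₂'⟩ := Set.not_subset.1 hne.2
  rcases le_total (v (z₁ - x)) (v (z₂ - x)) with h | h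
  · exact hz₁' (h₂.closedDisk_subset hna hx₂ hz₂ h)
  · exact hz₂' (h₁.closedDisk_subset hna hx₁ hz₁ h)

lemma IsDiskComponent.eq_of_nonempty_inter (hna : IsNonarchimedean v) {S D₁ D₂ : Set K}
    (h₁ : IsDiskComponent v S D₁) (h₂ : IsDiskComponent v S D₂) (h : (D₁ ∩ D₂).Nonempty) :
    D₁ = D₂ := by
  rcases h₁.1.subset_or_subset hna h₂.1 h with h12 | h21
  · exact (h₁.2.2 D₂ h₂.1 h12 h₂.2.1).symm
  · exact h₂.2.2 D₁ h₁.1 h21 h₁.2.1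

lemma IsDiskComponent.mono {S S' D : Set K} (h : IsDiskComponent v S D) (hDS' : D ⊆ S')
    (hS' : S' ⊆ S) : IsDiskComponent v S' D :=
  ⟨h.1, hDS', fun D' hD' hDD' hD'S' => h.2.2 D' hD' hDD' (hD'S'.trans hS')⟩

end Disks

section RootCount

variable {K : Type*} [Field K]

noncomputable def rootCount (p : K[X]) (S : Set K) : ℕ := Multiset.card (p.roots.filter (· ∈ S))

lemma rootCount_mono (p : K[X]) {S T : Set K} (h : S ⊆ T) : rootCount p S ≤ rootCount p T :=
  Multiset.card_le_card (Multiset.monotone_filter_right _ fun _ hz => h hz)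

lemma rootCount_congr {p : K[X]} {S T : Set K} (h : ∀ z, p.IsRoot z → (z ∈ S ↔ z ∈ T)) :
    rootCount p S = rootCount p T := by
  unfold rootCount
  congr 1
  exact Multiset.filter_congr fun z hz => h z (isRoot_of_mem_roots hz)

lemma rootCount_union (p : K[X]) {S T : Set K} (h : Disjoint S T) :
    rootCount p (S ∪ T) = rootCount p S + rootCount p T := by
  have hempty : p.roots.filter (fun z => z ∈ S ∧ z ∈ T) = 0 :=
    Multiset.filter_eq_nil.2 fun z _ hz => Set.disjoint_left.1 h hz.1 hz.2
  have := congrArg Multiset.card (Multiset.filter_add_filter (· ∈ S) (· ∈ T) p.roots)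
  rw [hempty, add_zero, Multiset.card_add] at this
  simp only [rootCount, Set.mem_union]
  convert this.symm

lemma rootCount_biUnion {ι : Type*} (p : K[X]) (s : Finset ι) {D : ι → Set K}
    (h : (s : Set ι).PairwiseDisjoint D) :
    rootCount p (⋃ i ∈ s, D i) = ∑ i ∈ s, rootCount p (D i) := by
  induction s using Finset.induction_on with
  | empty => simp [rootCount]
  | insert i s hi ih =>
    rw [Finset.set_biUnion_insert, rootCount_union, ih (h.subset (by simp)),
      Finset.sum_insert hi]
    exact Set.disjoint_iUnion₂_right.2 fun j hj =>
      h (by simp) (by simp [hj]) (ne_of_mem_of_not_mem hj hi).symm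

lemma rootCount_pos {p : K[X]} {S : Set K} (hp : p ≠ 0) {x : K} (hx : p.IsRoot x) (hxS : x ∈ S) :
    0 < rootCount p S :=
  Multiset.card_pos_iff_exists_mem.2 ⟨x, Multiset.mem_filter.2 ⟨(mem_roots hp).2 hx, hxS⟩⟩

lemma exists_isRoot_of_rootCount_pos {p : K[X]} {S : Set K} (h : 0 < rootCount p S) :
    ∃ z ∈ S, p.IsRoot z := by
  obtain ⟨z, hz⟩ := Multiset.card_pos_iff_exists_mem.1 h
  rw [Multiset.mem_filter] at hz
  exact ⟨z, hz.2, isRoot_of_mem_roots hz.1⟩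

lemma two_le_rootCount {p : K[X]} {S : Set K} (hp : p ≠ 0) {z z' : K} (hz : z ∈ S)
    (hz' : z' ∈ S) (hne : z ≠ z') (hroot : p.IsRoot z) (hroot' : p.IsRoot z') :
    2 ≤ rootCount p S := by
  calc 2 = ({z, z'} : Finset K).card := (Finset.card_pair hne).symm
    _ ≤ (p.roots.filter (· ∈ S)).toFinset.card := Finset.card_le_card (by
        intro w hw
        simp only [Finset.mem_insert, Finset.mem_singleton] at hw
        rcases hw with rfl | rfl <;> simp_all [mem_roots hp])
    _ ≤ rootCount p S := Multiset.toFinset_card_le _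

end RootCount

section DominantRange

variable {R : Type*} [CommRing R] {v : AbsoluteValue R ℝ} {t : ℝ}

variable (v) in
/-- `[a, b]` is the segment of slope `log t` of the Newton polygon of `q`, and
`N = max_i v (q.coeff i) * t ^ i`. -/
structure IsDominantRange (t : ℝ) (q : R[X]) (N : ℝ) (a b : ℕ) : Prop where
  le : ∀ i, v (q.coeff i) * t ^ i ≤ N
  eq_left : v (q.coeff a) * t ^ a = N
  eq_right : v (q.coeff b) * t ^ b = N
  mem_Icc : ∀ i, v (q.coeff i) * t ^ i = N → a ≤ i ∧ i ≤ b

namespace IsDominantRange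

variable {q : R[X]} {N : ℝ} {a b : ℕ}

lemma of_eq_iff (hab : a ≤ b) (hle : ∀ i, v (q.coeff i) * t ^ i ≤ N)
    (hiff : ∀ i, v (q.coeff i) * t ^ i = N ↔ a ≤ i ∧ i ≤ b) : IsDominantRange v t q N a b :=
  ⟨hle, (hiff a).2 ⟨le_rfl, hab⟩, (hiff b).2 ⟨hab, le_rfl⟩, fun i hi => (hiff i).1 hi⟩

lemma pos (h : IsDominantRange v t q N a b) (ht : 0 ≤ t) : 0 < N := by
  refine lt_of_le_of_ne (h.eq_left ▸ by positivity) fun hN => ?_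
  have hb := h.mem_Icc (b + 1) (le_antisymm (h.le _) (hN ▸ by positivity))
  omega

lemma lt_of_not_mem (h : IsDominantRange v t q N a b) {i : ℕ} (hi : i < a ∨ b < i) :
    v (q.coeff i) * t ^ i < N :=
  lt_of_le_of_ne (h.le i) fun he => by have := h.mem_Icc i he; omega

end IsDominantRange

lemma isDominantRange_C {c : R} (hc : c ≠ 0) : IsDominantRange v t (C c) (v c) 0 0 := by
  refine .of_eq_iff le_rfl (fun i => ?_) fun i => ?_ <;> rcases i with _ | i
  all_goals simp [coeff_C, eq_comm (a := (0 : ℝ)), hc]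

open Finset.HasAntidiagonal

lemma IsNonarchimedean.exists_mem_antidiagonal_apply_coeff_mul_le (hna : IsNonarchimedean v)
    (p q : R[X]) (n : ℕ) :
    ∃ x ∈ antidiagonal n, v ((p * q).coeff n) ≤ v (p.coeff x.1 * q.coeff x.2) := by
  rw [coeff_mul]
  exact hna.finset_image_add_of_nonempty _ ⟨(0, n), by simp⟩

lemma IsNonarchimedean.apply_coeff_mul_eq_of_lt (hna : IsNonarchimedean v) {p q : R[X]} {n : ℕ}
    {k : ℕ × ℕ} (hk : k ∈ antidiagonal n) (h : ∀ x ∈ antidiagonal n, x ≠ k →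
      v (p.coeff x.1 * q.coeff x.2) < v (p.coeff k.1 * q.coeff k.2)) :
    v ((p * q).coeff n) = v (p.coeff k.1 * q.coeff k.2) := by
  rw [coeff_mul]
  exact hna.apply_sum_eq_of_lt (fun _ => (v.map_neg _).symm) hk h

namespace IsDominantRange

variable {p q : R[X]} {M N : ℝ} {a b c d : ℕ}

lemma mul_term_le (hp : IsDominantRange v t p M a b) (hq : IsDominantRange v t q N c d)
    (ht : 0 ≤ t) (i j : ℕ) : v (p.coeff i * q.coeff j) * t ^ (i + j) ≤ M * N := by
  rw [map_mul, pow_add, mul_mul_mul_comm]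
  exact mul_le_mul (hp.le i) (hq.le j) (by positivity) (hp.pos ht).le

lemma mul_term_lt (hp : IsDominantRange v t p M a b) (hq : IsDominantRange v t q N c d)
    (ht : 0 ≤ t) {i j : ℕ} (h : (i < a ∨ b < i) ∨ (j < c ∨ d < j)) :
    v (p.coeff i * q.coeff j) * t ^ (i + j) < M * N := by
  rw [map_mul, pow_add, mul_mul_mul_comm]
  rcases h with h | h
  · exact mul_lt_mul_of_lt_of_le_of_nonneg_of_pos (hp.lt_of_not_mem h) (hq.le j)
      (by positivity) (hq.pos ht)
  · exact mul_lt_mul_of_le_of_lt_of_nonneg_of_pos (hp.le i) (hq.lt_of_not_mem h)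
      (by positivity) (hp.pos ht)

/-- Gauss's lemma, keeping track of the dominant indices. -/
lemma mul (hna : IsNonarchimedean v) (ht : 0 < t) (hp : IsDominantRange v t p M a b)
    (hq : IsDominantRange v t q N c d) :
    IsDominantRange v t (p * q) (M * N) (a + c) (b + d) := by
  have hdom : ∀ {n : ℕ} {k : ℕ × ℕ}, k ∈ antidiagonal n →
      v (p.coeff k.1 * q.coeff k.2) * t ^ n = M * N →
      (∀ x ∈ antidiagonal n, x ≠ k → (x.1 < a ∨ b < x.1) ∨ (x.2 < c ∨ d < x.2)) →
      v ((p * q).coeff n) * t ^ n = M * N := by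
    intro n k hk hkN hothers
    rw [hna.apply_coeff_mul_eq_of_lt hk fun x hx hxk => ?_, hkN]
    refine lt_of_mul_lt_mul_right ?_ (pow_nonneg ht.le n)
    rw [hkN, ← mem_antidiagonal.1 hx]
    exact hp.mul_term_lt hq ht.le (hothers x hx hxk)
  refine ⟨fun n => ?_, ?_, ?_, fun n hn => ?_⟩
  · obtain ⟨x, hx, hle⟩ := hna.exists_mem_antidiagonal_apply_coeff_mul_le p q n
    exact (mul_le_mul_of_nonneg_right hle (by positivity)).trans
      (mem_antidiagonal.1 hx ▸ hp.mul_term_le hq ht.le _ _)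
  · refine hdom (k := (a, c)) (by simp) ?_ fun x hx hne => ?_
    · rw [map_mul, pow_add, mul_mul_mul_comm, hp.eq_left, hq.eq_left]
    · rw [mem_antidiagonal] at hx
      by_contra! h
      exact hne (Prod.ext (by omega) (by omega))
  · refine hdom (k := (b, d)) (by simp) ?_ fun x hx hne => ?_
    · rw [map_mul, pow_add, mul_mul_mul_comm, hp.eq_right, hq.eq_right]
    · rw [mem_antidiagonal] at hx
      by_contra! h
      exact hne (Prod.ext (by omega) (by omega))
  · obtain ⟨x, hx, hle⟩ := hna.exists_mem_antidiagonal_apply_coeff_mul_le p q n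
    rw [mem_antidiagonal] at hx
    by_contra hout
    refine ((mul_le_mul_of_nonneg_right hle (by positivity)).trans_lt ?_).ne hn
    rw [← hx]
    exact hp.mul_term_lt hq ht.le (by omega)

end IsDominantRange

lemma isDominantRange_X_sub_C [Nontrivial R] (ht : 0 < t) (z : R) :
    IsDominantRange v t (X - C z) (max t (v z)) (if v z < t then 1 else 0)
      (if v z ≤ t then 1 else 0) := by
  have hcoeff : ∀ i, v ((X - C z).coeff i) * t ^ i =
      if i = 0 then v z else if i = 1 then t else 0 := by
    rintro (_ | _ | i) <;> simp [coeff_X, coeff_C]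
  have hz := v.nonneg z
  rcases lt_trichotomy (v z) t with h | h | h
  · rw [if_pos h, if_pos h.le, max_eq_left h.le]
    refine .of_eq_iff le_rfl (fun i => ?_) fun i => ?_ <;> rw [hcoeff] <;>
      rcases i with _ | _ | i <;> simp <;> linarith
  · rw [if_neg (not_lt.2 h.ge), if_pos h.le, h, max_self]
    refine .of_eq_iff zero_le_one (fun i => ?_) fun i => ?_ <;> rw [hcoeff] <;>
      rcases i with _ | _ | i <;> simp <;> linarith
  · rw [if_neg (not_lt.2 h.le), if_neg (not_le.2 h), max_eq_right h.le]
    refine .of_eq_iff le_rfl (fun i => ?_) fun i => ?_ <;> rw [hcoeff] <;>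
      rcases i with _ | _ | i <;> simp <;> linarith

lemma isDominantRange_prod_X_sub_C [Nontrivial R] (hna : IsNonarchimedean v) (ht : 0 < t)
    (s : Multiset R) :
    IsDominantRange v t (s.map fun z => X - C z).prod (s.map fun z => max t (v z)).prod
      (s.countP (v · < t)) (s.countP (v · ≤ t)) := by
  induction s using Multiset.induction_on with
  | empty => simpa using isDominantRange_C (v := v) (t := t) one_ne_zero
  | cons z s ih =>
    simpa [Multiset.countP_cons, add_comm] using (isDominantRange_X_sub_C ht z).mul hna ht ih

namespace IsDominantRange

variable {q : R[X]} {N : ℝ} {a b : ℕ}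

lemma derivative [Nontrivial R] (hna : IsNonarchimedean v) (ht : 0 < t) {N' : ℝ} {a' b' n : ℕ}
    (hq : IsDominantRange v t q N a b) (hq' : IsDominantRange v t q.derivative N' a' b')
    (hn : v (q.coeff n) * t ^ n = N) (hn1 : 1 ≤ n) (hvn : v (n : R) = 1) :
    a' ≤ n - 1 ∧ n - 1 ≤ b' ∧ a ≤ a' + 1 ∧ b' + 1 ≤ b := by
  have hstep : ∀ m, v (q.derivative.coeff m) * t ^ m * t =
      v (q.coeff (m + 1)) * t ^ (m + 1) * v ((m + 1 : ℕ) : R) := by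
    intro m
    rw [coeff_derivative, map_mul, pow_succ]
    push_cast
    ring
  have hle : ∀ m, v (q.derivative.coeff m) * t ^ m * t ≤ v (q.coeff (m + 1)) * t ^ (m + 1) :=
    fun m => (hstep m).trans_le
      (mul_le_of_le_one_right (by positivity) (hna.apply_natCast_le_one))
  have hn' : v (q.derivative.coeff (n - 1)) * t ^ (n - 1) * t = N := by
    rw [hstep, Nat.sub_add_cancel hn1, hvn, mul_one, hn]
  have hN' : N' * t = N := by
    refine le_antisymm ?_ (hn' ▸ mul_le_mul_of_nonneg_right (hq'.le _) ht.le)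
    rw [← hq'.eq_left]
    exact (hle a').trans (hq.le _)
  have hsucc : ∀ m, v (q.derivative.coeff m) * t ^ m = N' →
      v (q.coeff (m + 1)) * t ^ (m + 1) = N := fun m hm =>
    le_antisymm (hq.le _) (hN' ▸ hm ▸ hle m)
  have hmid := hq'.mem_Icc (n - 1)
    (mul_right_cancel₀ ht.ne' (hn'.trans hN'.symm))
  have hleft := hq.mem_Icc _ (hsucc _ hq'.eq_left)
  have hright := hq.mem_Icc _ (hsucc _ hq'.eq_right)
  omega

lemma derivative_ne_zero [Nontrivial R] (ht : 0 < t) (hq : IsDominantRange v t q N a b) {n : ℕ}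
    (hn : v (q.coeff n) * t ^ n = N) (hn1 : 1 ≤ n) (hvn : v (n : R) = 1) : q.derivative ≠ 0 := by
  intro h
  have hcoeff := congrArg (fun r => v (r.coeff (n - 1))) h
  have hcast : ((n - 1 : ℕ) : R) + 1 = n := by rw [← Nat.cast_add_one, Nat.sub_add_cancel hn1]
  simp only [coeff_derivative, coeff_zero, map_zero, map_mul, hcast, hvn, mul_one,
    Nat.sub_add_cancel hn1] at hcoeff
  exact (hq.pos ht.le).ne' (by rw [← hn, hcoeff, zero_mul])

lemma sub_C (ht : 0 < t) {w : R} {N' : ℝ} {a' b' : ℕ} (hq : IsDominantRange v t q N a b)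
    (hq' : IsDominantRange v t (q - C w) N' a' b') (h0 : q.coeff 0 = 0) (hw : v w ≤ N) :
    b' = b ∧ (v w < N → a' = a) := by
  have hN := hq.pos ht.le
  have hcoeff : ∀ i, i ≠ 0 → (q - C w).coeff i = q.coeff i := fun i hi => by
    simp [coeff_C, hi]
  have hcoeff0 : v ((q - C w).coeff 0) * t ^ 0 = v w := by simp [h0]
  have ha : a ≠ 0 := by
    rintro rfl
    exact hN.ne (by simpa [h0] using hq.eq_left)
  have hab := (hq.mem_Icc b hq.eq_right).1
  have hNN' : N' = N := by
    refine le_antisymm ?_ (hq.eq_right ▸ hcoeff b (by omega) ▸ hq'.le b)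
    rw [← hq'.eq_right]
    rcases eq_or_ne b' 0 with rfl | hb'
    · exact hcoeff0 ▸ hw
    · exact hcoeff b' hb' ▸ hq.le b'
  subst hNN'
  refine ⟨le_antisymm ?_ (hq'.mem_Icc b (hcoeff b (by omega) ▸ hq.eq_right)).2, fun hwN => ?_⟩
  · rcases eq_or_ne b' 0 with hb' | hb'
    · omega
    · exact (hq.mem_Icc b' (hcoeff b' hb' ▸ hq'.eq_right)).2
  · have ha' : a' ≠ 0 := by
      rintro rfl
      exact hwN.ne (hcoeff0 ▸ hq'.eq_left)
    exact le_antisymm (hq'.mem_Icc a (hcoeff a ha ▸ hq.eq_left)).1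
      (hq.mem_Icc a' (hcoeff a' ha' ▸ hq'.eq_left)).1

end IsDominantRange

end DominantRange

namespace Polynomial

lemma derivative_taylor {R : Type*} [CommSemiring R] (r : R) (p : R[X]) :
    (taylor r p).derivative = taylor r p.derivative := by
  simp [taylor_apply, derivative_comp]

lemma taylor_eq_C_leadingCoeff_mul_prod {K : Type*} [Field K] [IsAlgClosed K] (p : K[X])
    (x : K) :
    taylor x p = C p.leadingCoeff * ((p.roots.map (· - x)).map fun z => X - C z).prod := by
  conv_lhs => rw [← C_leadingCoeff_mul_prod_multiset_X_sub_C
    (IsAlgClosed.card_roots_eq_natDegree (p := p))]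
  rw [taylor_mul, taylor_C, show taylor x _ = taylorAlgHom x _ from rfl, map_multiset_prod,
    Multiset.map_map, Multiset.map_map]
  refine congrArg _ (congrArg _ (Multiset.map_congr rfl fun z _ => ?_))
  change taylor x (X - C z) = X - C (z - x)
  rw [map_sub, taylor_X, taylor_C, C_sub]
  ring

end Polynomial

section GaussNormAt

variable {K : Type*} [Field K] {v : AbsoluteValue K ℝ}

variable (v) in
/-- For split `p` this is the Gauss norm `(taylor x p).gaussNorm v t`, i.e. the supremum of
`v ∘ p` on the closed disk of radius `t` about `x`. -/
noncomputable def gaussNormAt (p : K[X]) (x : K) (t : ℝ) : ℝ :=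
  v p.leadingCoeff * (p.roots.map fun z => max t (v (z - x))).prod

lemma continuous_gaussNormAt (p : K[X]) (x : K) : Continuous (gaussNormAt v p x) :=
  continuous_const.mul (continuous_multiset_prod _ fun _ _ => continuous_id.max continuous_const)

lemma gaussNormAt_strictMonoOn {p : K[X]} (hp : p ≠ 0) {x : K} (hx : p.IsRoot x) :
    StrictMonoOn (gaussNormAt v p x) (Set.Ici 0) := by
  intro s hs t ht hst
  set P := fun t : ℝ => ((p.roots.erase x).map fun z => max t (v (z - x))).prod
  have hsplit : ∀ t : ℝ, 0 ≤ t → gaussNormAt v p x t = v p.leadingCoeff * (t * P t) := by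
    intro t ht
    rw [gaussNormAt, ← Multiset.cons_erase ((mem_roots hp).2 hx), Multiset.map_cons,
      Multiset.prod_cons, sub_self, map_zero, max_eq_left ht]
  have hPle : P s ≤ P t := Multiset.prod_map_le_prod_map₀ _ _
    (fun _ _ => le_max_of_le_left (Set.mem_Ici.1 hs)) fun _ _ => max_le_max_right _ hst.le
  have hPpos : 0 < P t := Multiset.prod_pos fun _ h => by
    obtain ⟨z, -, rfl⟩ := Multiset.mem_map.1 h
    exact lt_max_of_lt_left ((Set.mem_Ici.1 hs).trans_lt hst)
  rw [hsplit s hs, hsplit t ht]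
  refine mul_lt_mul_of_pos_left ?_ (v.pos (leadingCoeff_ne_zero.2 hp))
  exact (mul_le_mul_of_nonneg_left hPle hs).trans_lt (mul_lt_mul_of_pos_right hst hPpos)

lemma exists_eq_gaussNormAt (p : K[X]) (x z : K) :
    ∃ w : K, v w = gaussNormAt v p x (v (z - x)) := by
  refine ⟨p.leadingCoeff *
    (p.roots.map fun d => if v (d - x) ≤ v (z - x) then z - x else d - x).prod, ?_⟩
  rw [map_mul, map_multiset_prod, Multiset.map_map, gaussNormAt]
  congr 2
  refine Multiset.map_congr rfl fun d _ => ?_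
  simp only [Function.comp_apply]
  split_ifs with h
  · exact (max_eq_left h).symm
  · exact (max_eq_right (not_le.1 h).le).symm

variable [IsAlgClosed K]

lemma v_eval_eq_prod (p : K[X]) (z : K) :
    v (p.eval z) = v p.leadingCoeff * (p.roots.map fun d => v (z - d)).prod := by
  conv_lhs => rw [← C_leadingCoeff_mul_prod_multiset_X_sub_C
    (IsAlgClosed.card_roots_eq_natDegree (p := p))]
  rw [eval_mul, eval_C, eval_multiset_prod, map_mul, map_multiset_prod, Multiset.map_map,
    Multiset.map_map]
  simp [Function.comp_def]

lemma v_eval_le_gaussNormAt (hna : IsNonarchimedean v) (p : K[X]) (x z : K) :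
    v (p.eval z) ≤ gaussNormAt v p x (v (z - x)) := by
  rw [v_eval_eq_prod, gaussNormAt]
  gcongr
  refine Multiset.prod_map_le_prod_map₀ _ _ (fun _ _ => v.nonneg _) fun d _ => ?_
  exact (hna.apply_sub_le_max_sub z x d).trans_eq (by rw [v.map_sub x d])

lemma gaussNormAt_zero (p : K[X]) (x : K) : gaussNormAt v p x 0 = v (p.eval x) := by
  rw [gaussNormAt, v_eval_eq_prod]
  congr 2
  exact Multiset.map_congr rfl fun d _ => by rw [max_eq_right (v.nonneg _), v.map_sub]

lemma exists_gaussNormAt_eq {p : K[X]} (hp : 0 < p.natDegree) {x : K} (hx : p.IsRoot x)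
    {s : ℝ} (hs : 0 < s) : ∃ T, 0 < T ∧ gaussNormAt v p x T = s := by
  have hc : 0 < v p.leadingCoeff := v.pos (leadingCoeff_ne_zero.2 (ne_zero_of_natDegree_gt hp))
  set t₁ := max 1 (s / v p.leadingCoeff)
  have ht₁ : 1 ≤ t₁ := le_max_left _ _
  have hlarge : s ≤ gaussNormAt v p x t₁ := by
    calc s ≤ v p.leadingCoeff * t₁ := by
          rw [← div_le_iff₀' hc]
          exact le_max_right _ _
      _ ≤ v p.leadingCoeff * (p.roots.map fun _ => t₁).prod := by
          rw [Multiset.map_const', Multiset.prod_replicate, IsAlgClosed.card_roots_eq_natDegree]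
          exact mul_le_mul_of_nonneg_left (le_self_pow₀ ht₁ hp.ne') hc.le
      _ ≤ gaussNormAt v p x t₁ := mul_le_mul_of_nonneg_left
          (Multiset.prod_map_le_prod_map₀ _ _ (fun _ _ => by positivity)
            fun _ _ => le_max_left _ _) hc.le
  have h0 : gaussNormAt v p x 0 = 0 := by rw [gaussNormAt_zero, hx.eq_zero, map_zero]
  obtain ⟨T, hT, hTs⟩ := intermediate_value_Icc (by linarith : (0 : ℝ) ≤ t₁)
    (continuous_gaussNormAt p x).continuousOn ⟨by rw [h0]; exact hs.le, hlarge⟩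
  refine ⟨T, lt_of_le_of_ne hT.1 ?_, hTs⟩
  rintro rfl
  exact hs.ne' (hTs ▸ h0)

/-- The Newton polygon of `p` about `x`, read off from the roots of `p`. -/
lemma isDominantRange_taylor (hna : IsNonarchimedean v) {t : ℝ} (ht : 0 < t) {p : K[X]}
    (hp : p ≠ 0) (x : K) :
    IsDominantRange v t (taylor x p) (gaussNormAt v p x t) (rootCount p (openDisk v x t))
      (rootCount p (closedDisk v x t)) := by
  have := (isDominantRange_C (v := v) (t := t) (leadingCoeff_ne_zero.2 hp)).mul hna ht
    (isDominantRange_prod_X_sub_C hna ht (p.roots.map (· - x)))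
  rw [taylor_eq_C_leadingCoeff_mul_prod]
  simpa [gaussNormAt, rootCount, Multiset.countP_map, Multiset.map_map] using this

lemma isDominantRange_taylor_derivative (hna : IsNonarchimedean v) {t : ℝ} (ht : 0 < t)
    {p : K[X]} (hp : p ≠ 0) (x : K) {n : ℕ}
    (hn : v ((taylor x p).coeff n) * t ^ n = gaussNormAt v p x t) (hn1 : 1 ≤ n)
    (hvn : v (n : K) = 1) :
    IsDominantRange v t (taylor x p).derivative (gaussNormAt v p.derivative x t)
      (rootCount p.derivative (openDisk v x t)) (rootCount p.derivative (closedDisk v x t)) := by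
  rw [derivative_taylor]
  refine isDominantRange_taylor hna ht (fun h => ?_) x
  exact (isDominantRange_taylor hna ht hp x).derivative_ne_zero ht hn hn1 hvn
    (by rw [derivative_taylor, h, map_zero])

lemma rootCount_sub_C_closedDisk (hna : IsNonarchimedean v) {t : ℝ} (ht : 0 < t) {p : K[X]}
    (hp : 0 < p.natDegree) {x w : K} (hx : p.IsRoot x) (hw : v w ≤ gaussNormAt v p x t) :
    rootCount (p - C w) (closedDisk v x t) = rootCount p (closedDisk v x t) := by
  have hpw := isDominantRange_taylor hna ht
    (ne_zero_of_natDegree_gt (n := 0) (by rwa [natDegree_sub_C] : 0 < (p - C w).natDegree)) x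
  rw [map_sub, taylor_C] at hpw
  exact ((isDominantRange_taylor hna ht (ne_zero_of_natDegree_gt hp) x).sub_C ht hpw
    (by rwa [taylor_coeff_zero]) hw).1

lemma rootCount_sub_C_openDisk (hna : IsNonarchimedean v) {t : ℝ} (ht : 0 < t) {p : K[X]}
    (hp : 0 < p.natDegree) {x w : K} (hx : p.IsRoot x) (hw : v w < gaussNormAt v p x t) :
    rootCount (p - C w) (openDisk v x t) = rootCount p (openDisk v x t) := by
  have hpw := isDominantRange_taylor hna ht
    (ne_zero_of_natDegree_gt (n := 0) (by rwa [natDegree_sub_C] : 0 < (p - C w).natDegree)) x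
  rw [map_sub, taylor_C] at hpw
  exact ((isDominantRange_taylor hna ht (ne_zero_of_natDegree_gt hp) x).sub_C ht hpw
    (by rwa [taylor_coeff_zero]) hw.le).2 hw

/-- Non-Archimedean Riemann–Hurwitz. -/
theorem rootCount_derivative (hna : IsNonarchimedean v) {D : Set K} (hD : IsDisk v D) {p : K[X]}
    (hpos : 1 ≤ rootCount p D) (hunit : v (rootCount p D : K) = 1) :
    rootCount p.derivative D = rootCount p D - 1 := by
  have hp : p ≠ 0 := by
    rintro rfl
    simp [rootCount] at hpos
  obtain ⟨x, t, ht, rfl | rfl⟩ := isDisk_iff.1 hD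
  all_goals have hq := isDominantRange_taylor hna ht hp x
  · have := hq.derivative hna ht
      (isDominantRange_taylor_derivative hna ht hp x hq.eq_left hpos hunit) hq.eq_left hpos hunit
    omega
  · have := hq.derivative hna ht
      (isDominantRange_taylor_derivative hna ht hp x hq.eq_right hpos hunit) hq.eq_right hpos hunit
    omega

lemma exists_eval_eq_gaussNormAt (hna : IsNonarchimedean v) {p : K[X]} (hp : 0 < p.natDegree)
    {x : K} (hx : p.IsRoot x) (z : K) :
    ∃ z', v (z' - x) ≤ v (z - x) ∧ v (p.eval z') = gaussNormAt v p x (v (z - x)) := by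
  rcases eq_or_ne z x with rfl | hzx
  · exact ⟨z, le_rfl, by rw [sub_self, map_zero, gaussNormAt_zero]⟩
  have hρ : 0 < v (z - x) := v.pos (sub_ne_zero.2 hzx)
  obtain ⟨w, hw⟩ := exists_eq_gaussNormAt (v := v) p x z
  have hcount := rootCount_sub_C_closedDisk hna hρ hp hx hw.le
  obtain ⟨z', hz', hroot⟩ := exists_isRoot_of_rootCount_pos (hcount ▸
    rootCount_pos (ne_zero_of_natDegree_gt hp) hx (by simp : x ∈ closedDisk v x (v (z - x))))
  refine ⟨z', hz', ?_⟩
  rw [← hw, show p.eval z' = w by simpa [sub_eq_zero] using hroot]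

end GaussNormAt

section Preimage

variable {K : Type*} [Field K] [IsAlgClosed K] {v : AbsoluteValue K ℝ}

lemma isDiskComponent_preimage_openDisk (hna : IsNonarchimedean v) {g : K[X]}
    (hg : 0 < g.natDegree) {x : K} (hx : g.IsRoot x) {T : ℝ} (hT : 0 < T) :
    IsDiskComponent v ((fun z => g.eval z) ⁻¹' openDisk v 0 (gaussNormAt v g x T))
      (openDisk v x T) := by
  have hmono := gaussNormAt_strictMonoOn (v := v) (ne_zero_of_natDegree_gt hg) hx
  refine ⟨isDisk_iff.2 ⟨x, T, hT, Or.inl rfl⟩, fun z hz => ?_, fun D' hD' hDD' hD'W => ?_⟩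
  · simpa using (v_eval_le_gaussNormAt hna g x z).trans_lt (hmono (v.nonneg _) hT.le hz)
  · refine Set.Subset.antisymm (fun z hz => ?_) hDD'
    obtain ⟨z', hz'x, hz'⟩ := exists_eval_eq_gaussNormAt hna hg hx z
    have hgz' := hD'W (hD'.closedDisk_subset hna (hDD' (by simpa using hT)) hz hz'x)
    simp only [Set.mem_preimage, mem_openDisk, sub_zero, hz'] at hgz'
    exact (hmono.lt_iff_lt (v.nonneg _) hT.le).1 hgz'

lemma isDiskComponent_preimage_closedDisk (hna : IsNonarchimedean v) {g : K[X]}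
    (hg : 0 < g.natDegree) {x : K} (hx : g.IsRoot x) {T : ℝ} (hT : 0 < T) :
    IsDiskComponent v ((fun z => g.eval z) ⁻¹' closedDisk v 0 (gaussNormAt v g x T))
      (closedDisk v x T) := by
  have hmono := gaussNormAt_strictMonoOn (v := v) (ne_zero_of_natDegree_gt hg) hx
  refine ⟨isDisk_iff.2 ⟨x, T, hT, Or.inr rfl⟩, fun z hz => ?_, fun D' hD' hDD' hD'W => ?_⟩
  · simpa using (v_eval_le_gaussNormAt hna g x z).trans (hmono.monotoneOn (v.nonneg _) hT.le hz)
  · refine Set.Subset.antisymm (fun z hz => ?_) hDD'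
    obtain ⟨z', hz'x, hz'⟩ := exists_eval_eq_gaussNormAt hna hg hx z
    have hgz' := hD'W (hD'.closedDisk_subset hna (hDD' (by simpa using hT.le)) hz hz'x)
    simp only [Set.mem_preimage, mem_closedDisk, sub_zero, hz'] at hgz'
    exact (hmono.le_iff_le (v.nonneg _) hT.le).1 hgz'

theorem exists_isDiskComponent_preimage (hna : IsNonarchimedean v) {f : K[X]}
    (hf : 0 < f.natDegree) {W : Set K} (hW : IsDisk v W) {x : K} (hx : f.eval x ∈ W) :
    ∃ D, IsDiskComponent v ((fun z => f.eval z) ⁻¹' W) D ∧ x ∈ D ∧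
      ∀ y ∈ W, rootCount (f - C y) D = rootCount (f - C (f.eval x)) D := by
  set g := f - C (f.eval x)
  have hg : 0 < g.natDegree := by rwa [natDegree_sub_C]
  have hgx : g.IsRoot x := by simp [g]
  have hsub : ∀ y, f - C y = g - C (y - f.eval x) := by simp [g]
  obtain ⟨s, hs, hWs⟩ := hW.exists_center hna hx
  obtain ⟨T, hT, rfl⟩ := exists_gaussNormAt_eq (v := v) hg hgx hs
  rcases hWs with rfl | rfl
  · refine ⟨openDisk v x T, ?_, by simpa using hT, fun y hy => ?_⟩
    · convert isDiskComponent_preimage_openDisk hna hg hgx hT using 1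
      ext z
      simp [g]
    · rw [hsub]
      exact rootCount_sub_C_openDisk hna hT hg hgx hy
  · refine ⟨closedDisk v x T, ?_, by simpa using hT.le, fun y hy => ?_⟩
    · convert isDiskComponent_preimage_closedDisk hna hg hgx hT using 1
      ext z
      simp [g]
    · rw [hsub]
      exact rootCount_sub_C_closedDisk hna hT hg hgx hy

end Preimage

section TwoIslands

variable {K : Type*} [Field K] {v : AbsoluteValue K ℝ}

lemma bijOn_of_rootCount_eq_one {f : K[X]} {D W : Set K}
    (hmaps : Set.MapsTo (fun z => f.eval z) D W) (h : ∀ y ∈ W, rootCount (f - C y) D = 1) :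
    Set.BijOn (fun z => f.eval z) D W := by
  refine ⟨hmaps, fun z hz z' hz' hzz' => ?_, fun y hy => ?_⟩
  · by_contra hne
    have hcount : rootCount (f - C (f.eval z)) D = 1 := h _ (hmaps hz)
    have hp : f - C (f.eval z) ≠ 0 := by
      rintro h0
      simp [h0, rootCount] at hcount
    have := two_le_rootCount hp hz hz' hne (by simp)
      (by simp [show f.eval z' = f.eval z from hzz'.symm])
    omega
  · obtain ⟨z, hz, hroot⟩ := exists_isRoot_of_rootCount_pos (p := f - C y)
      (by rw [h y hy]; exact one_pos)
    exact ⟨z, hz, by simpa [sub_eq_zero] using hroot⟩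

lemma IsDiskComponent.pairwiseDisjoint_image (hna : IsNonarchimedean v) {S : Set K}
    {D : K → Set K} (X : Finset K) (hD : ∀ x ∈ X, IsDiskComponent v S (D x)) :
    ((X.image D : Finset (Set K)) : Set (Set K)).PairwiseDisjoint id := by
  intro E₁ hE₁ E₂ hE₂ hne
  obtain ⟨x₁, hx₁, rfl⟩ := Finset.mem_image.1 hE₁
  obtain ⟨x₂, hx₂, rfl⟩ := Finset.mem_image.1 hE₂
  exact Set.disjoint_iff_inter_eq_empty.2 (Set.not_nonempty_iff_eq_empty.1 fun h =>
    hne ((hD x₁ hx₁).eq_of_nonempty_inter hna (hD x₂ hx₂) h))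

variable [IsAlgClosed K]

theorem rootCount_le_two_mul_rootCount_derivative (hna : IsNonarchimedean v) {p : K[X]}
    (𝒟 : Finset (Set K)) (hdisj : (𝒟 : Set (Set K)).PairwiseDisjoint id)
    (hdisk : ∀ D ∈ 𝒟, IsDisk v D)
    (hcount : ∀ D ∈ 𝒟, 2 ≤ rootCount p D ∧ v (rootCount p D : K) = 1) :
    rootCount p (⋃ D ∈ 𝒟, D) ≤ 2 * rootCount p.derivative (⋃ D ∈ 𝒟, D) := by
  have hsum := fun q : K[X] => rootCount_biUnion q 𝒟 hdisj
  simp only [id] at hsum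
  rw [hsum, hsum, Finset.mul_sum]
  refine Finset.sum_le_sum fun D hD => ?_
  obtain ⟨h2, hunit⟩ := hcount D hD
  rw [rootCount_derivative hna (hdisk D hD) (by omega) hunit]
  omega

theorem exists_le_two_mul_rootCount_derivative (hna : IsNonarchimedean v) {p : K[X]}
    (hp : p ≠ 0) {U S : Set K} {e : ℕ} (hres : ∀ n : ℕ, 1 ≤ n → n ≤ e → v (n : K) = 1)
    (hpU : rootCount p U = e) (hSU : S ⊆ U) {D : K → Set K}
    (hD : ∀ x ∈ U, p.IsRoot x → IsDiskComponent v S (D x) ∧ x ∈ D x ∧ rootCount p (D x) ≠ 1) :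
    ∃ S' ⊆ S, e ≤ 2 * rootCount p.derivative S' := by
  set X := (p.roots.filter (· ∈ U)).toFinset
  have hX : ∀ x ∈ X, x ∈ U ∧ p.IsRoot x := fun x hx => by
    obtain ⟨hxp, hxU⟩ := Multiset.mem_filter.1 (Multiset.mem_toFinset.1 hx)
    exact ⟨hxU, isRoot_of_mem_roots hxp⟩
  have hDX : ∀ x ∈ X, IsDiskComponent v S (D x) := fun x hx => (hD x (hX x hx).1 (hX x hx).2).1
  have hsub : (⋃ E ∈ X.image D, E) ⊆ S := Set.iUnion₂_subset fun E hE => by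
    obtain ⟨x, hx, rfl⟩ := Finset.mem_image.1 hE
    exact (hDX x hx).2.1
  have hcover : ∀ z, p.IsRoot z → (z ∈ U ↔ z ∈ ⋃ E ∈ X.image D, E) := fun z hz =>
    ⟨fun hzU => Set.mem_biUnion (Finset.mem_image_of_mem D (Multiset.mem_toFinset.2
      (Multiset.mem_filter.2 ⟨(mem_roots hp).2 hz, hzU⟩))) (hD z hzU hz).2.1,
      fun hzE => hSU (hsub hzE)⟩
  have hlocal : ∀ E ∈ X.image D, 2 ≤ rootCount p E ∧ v (rootCount p E : K) = 1 := fun E hE => by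
    obtain ⟨x, hx, rfl⟩ := Finset.mem_image.1 hE
    obtain ⟨hxU, hxp⟩ := hX x hx
    have hpos := rootCount_pos hp hxp (hD x hxU hxp).2.1
    have hle := hpU ▸ rootCount_mono p ((hDX x hx).2.1.trans hSU)
    have hne := (hD x hxU hxp).2.2
    exact ⟨by omega, hres _ (by omega) hle⟩
  refine ⟨_, hsub, ?_⟩
  calc e = rootCount p (⋃ E ∈ X.image D, E) := hpU ▸ rootCount_congr hcover
    _ ≤ _ := rootCount_le_two_mul_rootCount_derivative hna _
        (IsDiskComponent.pairwiseDisjoint_image hna X hDX)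
        (fun E hE => by obtain ⟨x, hx, rfl⟩ := Finset.mem_image.1 hE; exact (hDX x hx).1) hlocal

lemma exists_isDiskComponent_inter_preimage (hna : IsNonarchimedean v) {f : K[X]}
    (hf : 0 < f.natDegree) {U V W : Set K} (hU : IsDisk v U)
    (hVU : V ⊆ (fun z => f.eval z) '' U) (hW : IsDisk v W) (hVW : ¬ V ⊆ W) {x : K}
    (hxU : x ∈ U) (hx : f.eval x ∈ W) :
    ∃ D, IsDiskComponent v (U ∩ (fun z => f.eval z) ⁻¹' W) D ∧ x ∈ D ∧
      ∀ y ∈ W, rootCount (f - C y) D = rootCount (f - C (f.eval x)) D := by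
  obtain ⟨D, hD, hxD, hcount⟩ := exists_isDiskComponent_preimage hna hf hW hx
  -- the disks `D` and `U` are nested, and `U ⊆ D` would give `V ⊆ f '' U ⊆ W`
  have hDU : D ⊆ U := (hD.1.subset_or_subset hna hU ⟨x, hxD, hxU⟩).resolve_right
    fun hUD => hVW fun y hy => by
      obtain ⟨z, hzU, rfl⟩ := hVU hy
      exact hD.2.1 (hUD hzU)
  exact ⟨D, hD.mono (Set.subset_inter hDU hD.2.1) Set.inter_subset_right, hxD, hcount⟩

theorem exists_bijOn_or_le_two_mul_rootCount_derivative (hna : IsNonarchimedean v) {f : K[X]}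
    {U V W : Set K} {e : ℕ} (he : 1 ≤ e) (hres : ∀ n : ℕ, 1 ≤ n → n ≤ e → v (n : K) = 1)
    (hU : IsDisk v U) (hdeg : ∀ y ∈ V, rootCount (f - C y) U = e) (hW : IsDisk v W)
    (hWV : W ⊆ V) (hVW : ¬ V ⊆ W) :
    (∃ D, IsDiskComponent v (U ∩ (fun z => f.eval z) ⁻¹' W) D ∧
        Set.BijOn (fun z => f.eval z) D W) ∨
      ∃ S ⊆ U ∩ (fun z => f.eval z) ⁻¹' W, e ≤ 2 * rootCount f.derivative S := by
  obtain ⟨y₀, hy₀⟩ := hW.nonempty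
  have hdeg₀ := hdeg y₀ (hWV hy₀)
  have hVU : V ⊆ (fun z => f.eval z) '' U := fun y hy => by
    obtain ⟨z, hz, hroot⟩ := exists_isRoot_of_rootCount_pos (p := f - C y)
      (by rw [hdeg y hy]; exact he)
    exact ⟨z, hz, by simpa [sub_eq_zero] using hroot⟩
  have hf : 0 < f.natDegree :=
    calc 0 < e := he
      _ = rootCount (f - C y₀) U := hdeg₀.symm
      _ ≤ (f - C y₀).roots.card := Multiset.card_le_card (Multiset.filter_le _ _)
      _ ≤ f.natDegree := natDegree_sub_C (a := y₀) ▸ card_roots' _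
  have hroot : ∀ x, (f - C y₀).IsRoot x ↔ f.eval x = y₀ := fun x => by simp [sub_eq_zero]
  have hcomp : ∀ x ∈ U, (f - C y₀).IsRoot x → ∃ D,
      IsDiskComponent v (U ∩ (fun z => f.eval z) ⁻¹' W) D ∧ x ∈ D ∧
        ∀ y ∈ W, rootCount (f - C y) D = rootCount (f - C y₀) D := fun x hxU hx => by
    rw [← (hroot x).1 hx] at hy₀ ⊢
    exact exists_isDiskComponent_inter_preimage hna hf hU hVU hW hVW hxU hy₀
  choose! D hD hxD hcount using hcomp
  by_cases hbij : ∃ x ∈ U, (f - C y₀).IsRoot x ∧ rootCount (f - C y₀) (D x) = 1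
  · obtain ⟨x, hxU, hx, h1⟩ := hbij
    exact Or.inl ⟨D x, hD x hxU hx, bijOn_of_rootCount_eq_one
      (fun z hz => ((hD x hxU hx).2.1 hz).2) fun y hy => (hcount x hxU hx y hy).trans h1⟩
  push Not at hbij
  obtain ⟨S, hS, heS⟩ := exists_le_two_mul_rootCount_derivative hna
    (ne_zero_of_natDegree_gt (n := 0) (by rwa [natDegree_sub_C])) hres hdeg₀
    Set.inter_subset_left fun x hxU hx => ⟨hD x hxU hx, hxD x hxU hx, hbij x hxU hx⟩
  rw [derivative_sub, derivative_C, sub_zero] at heS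
  exact Or.inr ⟨S, hS, heS⟩

end TwoIslands

theorem stmt_11_general {K : Type*} [Field K] [IsAlgClosed K]
    (v : AbsoluteValue K ℝ) (hna : IsNonarchimedean ⇑v)
    (f : K[X]) (U V : Set K) (r : ℝ)
    (hU : IsDiskOfRadius v U r)
    (e : ℕ) (he : 1 ≤ e)
    (hres : ∀ n : ℕ, 1 ≤ n → n ≤ e → v (n : K) = 1)
    (hdeg : ∀ y ∈ V, mapDegreeOn f U y = e)
    (V₁ V₂ : Set K) (hV₁ : IsDisk v V₁) (hV₂ : IsDisk v V₂)
    (hV₁V : V₁ ⊆ V) (hV₂V : V₂ ⊆ V) (hdisj : Disjoint V₁ V₂) :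
    (∃ D : Set K, IsDiskComponent v (U ∩ (fun z => f.eval z) ⁻¹' V₁) D ∧
        Set.BijOn (fun z => f.eval z) D V₁) ∨
      ∃ D : Set K, IsDiskComponent v (U ∩ (fun z => f.eval z) ⁻¹' V₂) D ∧
        Set.BijOn (fun z => f.eval z) D V₂ := by
  obtain ⟨hr, a, hUa⟩ := hU
  have hUdisk : IsDisk v U := ⟨a, r, hr, hUa⟩
  have hnot : ∀ {W W' : Set K}, IsDisk v W' → W' ⊆ V → Disjoint W W' → ¬ V ⊆ W :=
    fun hW' hW'V hWW' hVW => by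
      obtain ⟨y, hy⟩ := hW'.nonempty
      exact Set.disjoint_left.1 hWW' (hVW (hW'V hy)) hy
  obtain h₁ | ⟨S₁, hS₁, he₁⟩ := exists_bijOn_or_le_two_mul_rootCount_derivative hna he hres
    hUdisk hdeg hV₁ hV₁V (hnot hV₂ hV₂V hdisj)
  · exact Or.inl h₁
  obtain h₂ | ⟨S₂, hS₂, he₂⟩ := exists_bijOn_or_le_two_mul_rootCount_derivative hna he hres
    hUdisk hdeg hV₂ hV₂V (hnot hV₁ hV₁V hdisj.symm)
  · exact Or.inr h₂
  -- otherwise `S₁` and `S₂` together hold at least `e` critical points, but `U` holds `e - 1`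
  obtain ⟨y, hy⟩ := hV₁.nonempty
  have hdegy : rootCount (f - C y) U = e := hdeg y (hV₁V hy)
  have hcrit := rootCount_derivative hna hUdisk (hdegy ▸ he) (hdegy ▸ hres e he le_rfl)
  rw [derivative_sub, derivative_C, sub_zero, hdegy] at hcrit
  have hS : Disjoint S₁ S₂ := Set.disjoint_left.2 fun z h₁ h₂ =>
    Set.disjoint_left.1 hdisj (hS₁ h₁).2 (hS₂ h₂).2
  have hunion := rootCount_union f.derivative hS
  have hle := rootCount_mono f.derivative
    (Set.union_subset (hS₁.trans Set.inter_subset_left) (hS₂.trans Set.inter_subset_left))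
  omega

/-- Non-Archimedean two-islands lemma: for a polynomial map `f : U → V` of degree
`e ≥ 1` between disks (with `e` less than the residue characteristic if positive) and
disjoint disks `V₁, V₂ ⊆ V`, some disk component of one of the preimages `f⁻¹(Vⱼ)`
is mapped bijectively onto `Vⱼ` by `f`. -/
theorem stmt_11 {K : Type*} [Field K] [IsAlgClosed K]
    (v : AbsoluteValue K ℝ) (hna : IsNonarchimedean ⇑v)
    (f : K[X]) (U V : Set K) (r s : ℝ)
    (hU : IsDiskOfRadius v U r) (hV : IsDiskOfRadius v V s)
    (e : ℕ) (he : 1 ≤ e)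
    (hres : ∀ n : ℕ, 1 ≤ n → n ≤ e → v (n : K) = 1)
    (hmaps : Set.MapsTo (fun z => f.eval z) U V)
    (hdeg : ∀ y ∈ V, mapDegreeOn f U y = e)
    (V₁ V₂ : Set K) (hV₁ : IsDisk v V₁) (hV₂ : IsDisk v V₂)
    (hV₁V : V₁ ⊆ V) (hV₂V : V₂ ⊆ V) (hdisj : Disjoint V₁ V₂) :
    (∃ D : Set K, IsDiskComponent v (U ∩ (fun z => f.eval z) ⁻¹' V₁) D ∧
        Set.BijOn (fun z => f.eval z) D V₁) ∨
      ∃ D : Set K, IsDiskComponent v (U ∩ (fun z => f.eval z) ⁻¹' V₂) D ∧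
        Set.BijOn (fun z => f.eval z) D V₂ :=
  stmt_11_general v hna f U V r hU e he hres hdeg V₁ V₂ hV₁ hV₂ hV₁V hV₂V hdisj
end
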